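/- In the plactic monoid P_n, every word w over {1,...,n} is congruent to the column reading of its Schensted tableau: w = C(P(w)) in P_n. -/

import Mathlib

/-- A column over `{1,…,n}`: a nonempty strictly decreasing word. -/
def IsColumn (n : ℕ) (w : List ℕ) : Prop :=
  w ≠ [] ∧ w.Chain' (· > ·) ∧ ∀ x ∈ w, 1 ≤ x ∧ x ≤ n

/-- Schensted row insertion of a letter into a row: replace the leftmost entry
greater than `y` by `y` and bump it, or append `y` at the end of the row. -/
def rowInsert (row : List ℕ) (y : ℕ) : List ℕ × Option ℕ :=
  let j := row.findIdx (fun x => decide (y < x))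
  if h : j < row.length then (row.set j y, some (row.get ⟨j, h⟩))
  else (row ++ [y], none)

/-- Schensted insertion of a letter into a tableau (given as its list of rows,
from top to bottom). -/
def tabInsert : List (List ℕ) → ℕ → List (List ℕ)
  | [], y => [[y]]
  | r :: rest, y =>
    match rowInsert r y with
    | (r', none) => r' :: rest
    | (r', some z) => r' :: tabInsert rest z

/-- The Schensted tableau `P(w)` of a word `w`, as a list of rows. -/
def Schensted (w : List ℕ) : List (List ℕ) := w.foldl tabInsert []

/-- The left column of a tableau, read bottom to top (a decreasing word). -/
def leftCol (t : List (List ℕ)) : List ℕ := (t.map (fun r => r.headD 0)).reverse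

/-- The right column of a (two-column) tableau, read bottom to top. -/
def rightCol (t : List (List ℕ)) : List ℕ := (t.filterMap (fun r => r[1]?)).reverse

/-- The word over column generators determined by a tableau with at most two
columns. -/
def outCols (t : List (List ℕ)) : List (List ℕ) :=
  if rightCol t = [] then [leftCol t] else [leftCol t, rightCol t]

/-- Two columns `u = x_p…x_1`, `v = y_q…y_1` form a tableau configuration when
`q ≤ p` and `x_i ≤ y_i` for all `i ≤ q`. -/
def TabPair (u v : List ℕ) : Prop :=
  v.length ≤ u.length ∧ ∀ i, i < v.length → u.reverse.getD i 0 ≤ v.reverse.getD i 0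

/-- The column reading of a tableau (as a list of rows): columns are read
bottom to top, from left to right. -/
def colReading (t : List (List ℕ)) : List ℕ :=
  ((List.range ((t.map List.length).foldr max 0)).map
    (fun j => (t.filterMap (fun r => r[j]?)).reverse)).flatten

/-- The two Knuth rules on words over `{1,…,n}`. -/
def KnuthPair (n : ℕ) (w w' : List ℕ) : Prop :=
  (∃ x y z, 1 ≤ x ∧ x ≤ y ∧ y < z ∧ z ≤ n ∧ w = [z, x, y] ∧ w' = [x, z, y]) ∨
  (∃ x y z, 1 ≤ x ∧ x < y ∧ y ≤ z ∧ z ≤ n ∧ w = [y, z, x] ∧ w' = [y, x, z])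

/-- One application of a Knuth rule in context. -/
def KnuthStep (n : ℕ) (w w' : List ℕ) : Prop :=
  ∃ a b u v, KnuthPair n u v ∧ w = a ++ u ++ b ∧ w' = a ++ v ++ b

/-!
Knuth moves realise Schensted row insertion: if inserting `y` into a row `α z β` bumps `z`
(so `α ≤ y < z ≤ β`), then `α z β y ≡ z α y β`, by sliding `y` leftwards through `β` up
to `z` and then `z` leftwards through `α`. Inserting the letters of `w` one at a time
therefore keeps `w` congruent to the row reading (bottom row first) of the current tableau.
In a semistandard tableau, the first column `c` of the rows above a row `a s` is strictly
decreasing with all entries smaller than `a`, so `a s c ≡ a c s`; by induction on the rows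
this turns the row reading into `c` followed by the row reading of the rest, and induction
on the width yields the column reading.
-/

abbrev KnuthEquiv (n : ℕ) : List ℕ → List ℕ → Prop := Relation.EqvGen (KnuthStep n)

namespace KnuthEquiv

variable {n : ℕ} {u v w : List ℕ}

theorem refl (u : List ℕ) : KnuthEquiv n u u := Relation.EqvGen.refl u

theorem symm (h : KnuthEquiv n u v) : KnuthEquiv n v u := Relation.EqvGen.symm _ _ h

theorem trans (h₁ : KnuthEquiv n u v) (h₂ : KnuthEquiv n v w) : KnuthEquiv n u w :=
  Relation.EqvGen.trans _ _ _ h₁ h₂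

instance : Trans (KnuthEquiv n) (KnuthEquiv n) (KnuthEquiv n) := ⟨trans⟩

theorem append_append (a b : List ℕ) (h : KnuthEquiv n u v) :
    KnuthEquiv n (a ++ u ++ b) (a ++ v ++ b) := by
  induction h with
  | rel _ _ h =>
    obtain ⟨a', b', u', v', hp, rfl, rfl⟩ := h
    exact .rel _ _ ⟨a ++ a', b' ++ b, u', v', hp, by simp, by simp⟩
  | refl => exact refl _
  | symm _ _ _ ih => exact ih.symm
  | trans _ _ _ _ _ ih₁ ih₂ => exact ih₁.trans ih₂

theorem append_left (a : List ℕ) (h : KnuthEquiv n u v) : KnuthEquiv n (a ++ u) (a ++ v) := by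
  simpa using h.append_append a []

theorem append_right (b : List ℕ) (h : KnuthEquiv n u v) : KnuthEquiv n (u ++ b) (v ++ b) := by
  simpa using h.append_append [] b

theorem cons (a : ℕ) (h : KnuthEquiv n u v) : KnuthEquiv n (a :: u) (a :: v) :=
  h.append_left [a]

theorem zxy {x y z : ℕ} (hx : 1 ≤ x) (hxy : x ≤ y) (hyz : y < z) (hz : z ≤ n) (b : List ℕ) :
    KnuthEquiv n (z :: x :: y :: b) (x :: z :: y :: b) :=
  .rel _ _ ⟨[], b, _, _, .inl ⟨x, y, z, hx, hxy, hyz, hz, rfl, rfl⟩, rfl, rfl⟩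

theorem yzx {x y z : ℕ} (hx : 1 ≤ x) (hxy : x < y) (hyz : y ≤ z) (hz : z ≤ n) (b : List ℕ) :
    KnuthEquiv n (y :: z :: x :: b) (y :: x :: z :: b) :=
  .rel _ _ ⟨[], b, _, _, .inr ⟨x, y, z, hx, hxy, hyz, hz, rfl, rfl⟩, rfl, rfl⟩

end KnuthEquiv

section Sliding

variable {n : ℕ}

theorem knuthEquiv_row_append_singleton {g x : ℕ} (hx : 1 ≤ x) (hxg : x < g) :
    ∀ {u : List ℕ}, (g :: u).Pairwise (· ≤ ·) → (∀ d ∈ u, d ≤ n) →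
      KnuthEquiv n (g :: (u ++ [x])) (g :: x :: u)
  | [], _, _ => .refl _
  | d :: u, hs, hu => by
    have hgd : g ≤ d := List.rel_of_pairwise_cons hs (by simp)
    calc KnuthEquiv n (g :: d :: (u ++ [x])) (g :: d :: x :: u) :=
          ((knuthEquiv_row_append_singleton hx (hxg.trans_le hgd) hs.of_cons
            fun e he => hu e (by simp [he])).cons g)
      KnuthEquiv n _ (g :: x :: d :: u) := .yzx hx hxg hgd (hu d (by simp)) u

theorem knuthEquiv_row_append_pair {y z : ℕ} (hyz : y < z) (hz : z ≤ n) :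
    ∀ {α : List ℕ}, α.Pairwise (· ≤ ·) → (∀ a ∈ α, 1 ≤ a ∧ a ≤ y) →
      KnuthEquiv n (α ++ [z, y]) (z :: (α ++ [y]))
  | [], _, _ => .refl _
  | a :: α, hs, hα => by
    obtain ⟨t, β, hβ⟩ := List.exists_cons_of_ne_nil (List.append_ne_nil_of_right_ne_nil α
      (List.cons_ne_nil y []))
    have ht : t ∈ α ++ [y] := by simp [hβ]
    obtain ⟨hat, hty⟩ : a ≤ t ∧ t ≤ y := by
      rcases List.mem_append.1 ht with ht | ht
      · exact ⟨List.rel_of_pairwise_cons hs ht, (hα t (by simp [ht])).2⟩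
      · rw [List.mem_singleton.1 ht]; exact ⟨(hα a (by simp)).2, le_rfl⟩
    calc KnuthEquiv n (a :: (α ++ [z, y])) (a :: z :: (α ++ [y])) :=
          (knuthEquiv_row_append_pair hyz hz hs.of_cons fun b hb => hα b (by simp [hb])).cons a
      KnuthEquiv n _ (z :: a :: (α ++ [y])) := by
          rw [hβ]; exact (KnuthEquiv.zxy (hα a (by simp)).1 hat (hty.trans_lt hyz) hz β).symm

theorem knuthEquiv_row_append_column {g : ℕ} :
    ∀ {u d : List ℕ}, (g :: u).Pairwise (· ≤ ·) → (g :: d).Pairwise (· > ·) →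
      (∀ b ∈ u, b ≤ n) → (∀ x ∈ d, 1 ≤ x) → KnuthEquiv n (g :: (u ++ d)) (g :: (d ++ u))
  | u, [], _, _, _, _ => by simpa using .refl _
  | u, x :: d, hu, hd, hun, hd1 => by
    have hxg : x < g := List.rel_of_pairwise_cons hd (by simp)
    have hxu : (x :: u).Pairwise (· ≤ ·) :=
      .cons (fun b hb => hxg.le.trans (List.rel_of_pairwise_cons hu hb)) hu.of_cons
    calc KnuthEquiv n (g :: (u ++ x :: d)) (g :: x :: (u ++ d)) := by
          simpa using (knuthEquiv_row_append_singleton (hd1 x (by simp)) hxg hu hun).append_right d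
      KnuthEquiv n _ (g :: (x :: d ++ u)) :=
          ((knuthEquiv_row_append_column hxu hd.of_cons hun
            fun e he => hd1 e (by simp [he])).cons g)

theorem knuthEquiv_bump {α β : List ℕ} {y z : ℕ} (hα : α.Pairwise (· ≤ ·))
    (hzβ : (z :: β).Pairwise (· ≤ ·)) (hαy : ∀ a ∈ α, 1 ≤ a ∧ a ≤ y) (hyz : y < z) (hy : 1 ≤ y)
    (hβ : ∀ b ∈ z :: β, b ≤ n) :
    KnuthEquiv n (α ++ z :: β ++ [y]) (z :: (α ++ y :: β)) :=
  calc KnuthEquiv n (α ++ z :: β ++ [y]) (α ++ z :: y :: β) := by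
        simpa using (knuthEquiv_row_append_singleton hy hyz hzβ
          fun b hb => hβ b (by simp [hb])).append_left α
    KnuthEquiv n _ (z :: (α ++ y :: β)) := by
        simpa using (knuthEquiv_row_append_pair hyz (hβ z (by simp)) hα hαy).append_right β

end Sliding

def bumpIdx (r : List ℕ) (y : ℕ) : ℕ := r.findIdx (fun x => decide (y < x))

section RowInsertion

variable {r : List ℕ} {y : ℕ}

theorem rowInsert_of_lt (h : bumpIdx r y < r.length) :
    rowInsert r y = (r.set (bumpIdx r y) y, some r[bumpIdx r y]) :=
  dif_pos h

theorem rowInsert_of_not_lt (h : ¬bumpIdx r y < r.length) : rowInsert r y = (r ++ [y], none) :=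
  dif_neg h

theorem tabInsert_cons_of_lt {t : List (List ℕ)} (h : bumpIdx r y < r.length) :
    tabInsert (r :: t) y = r.set (bumpIdx r y) y :: tabInsert t r[bumpIdx r y] := by
  simp only [tabInsert, rowInsert_of_lt h]

theorem tabInsert_cons_of_not_lt {t : List (List ℕ)} (h : ¬bumpIdx r y < r.length) :
    tabInsert (r :: t) y = (r ++ [y]) :: t := by
  simp only [tabInsert, rowInsert_of_not_lt h]

theorem lt_getElem_bumpIdx (h : bumpIdx r y < r.length) : y < r[bumpIdx r y] :=
  of_decide_eq_true (List.findIdx_getElem (w := h))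

theorem getElem_le_of_lt_bumpIdx {i : ℕ} (hi : i < bumpIdx r y) (h : i < r.length) : r[i] ≤ y := by
  simpa using List.not_of_lt_findIdx hi

theorem le_of_not_bumpIdx_lt (h : ¬bumpIdx r y < r.length) : ∀ a ∈ r, a ≤ y := by
  intro a ha
  by_contra hya
  exact h (List.findIdx_lt_length_of_exists ⟨a, ha, by simpa using hya⟩)

theorem bumpIdx_le_length : bumpIdx r y ≤ r.length := List.findIdx_le_length

theorem getElem_set_bumpIdx_le {i : ℕ} (hi : i ≤ bumpIdx r y)
    (h : i < (r.set (bumpIdx r y) y).length) : (r.set (bumpIdx r y) y)[i] ≤ y := by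
  simp only [List.getElem_set]
  split_ifs with hij
  · exact le_rfl
  · exact getElem_le_of_lt_bumpIdx (lt_of_le_of_ne hi (Ne.symm hij)) _

theorem split_of_bumpIdx_lt (h : bumpIdx r y < r.length) :
    ∃ α β, r = α ++ r[bumpIdx r y] :: β ∧ r.set (bumpIdx r y) y = α ++ y :: β ∧ ∀ a ∈ α, a ≤ y :=
  ⟨r.take (bumpIdx r y), r.drop (bumpIdx r y + 1),
    by rw [← List.drop_eq_getElem_cons h, List.take_append_drop],
    by rw [List.set_eq_take_append_cons_drop, if_pos h],
    fun a ha => by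
      obtain ⟨i, hi, rfl⟩ := List.getElem_of_mem ha
      simp only [List.length_take] at hi
      simpa using getElem_le_of_lt_bumpIdx (by omega) _⟩

end RowInsertion

def IsRow (n : ℕ) (r : List ℕ) : Prop := r.Pairwise (· ≤ ·) ∧ ∀ x ∈ r, x ∈ Set.Icc 1 n

def RowAbove (r q : List ℕ) : Prop :=
  q.length ≤ r.length ∧ ∀ i (hq : i < q.length) (hr : i < r.length), r[i] < q[i]

def IsTableau (n : ℕ) (t : List (List ℕ)) : Prop := (∀ r ∈ t, IsRow n r) ∧ t.Pairwise RowAbove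

section Tableaux

variable {n : ℕ} {r q p : List ℕ} {y : ℕ}

theorem RowAbove.trans (h₁ : RowAbove r q) (h₂ : RowAbove q p) : RowAbove r p :=
  ⟨h₂.1.trans h₁.1, fun i hp hr => (h₁.2 i (hp.trans_le h₂.1) hr).trans (h₂.2 i hp _)⟩

theorem RowAbove.append (s : List ℕ) (h : RowAbove r q) : RowAbove (r ++ s) q :=
  ⟨h.1.trans (by simp), fun i hq _ => by
    rw [List.getElem_append_left (hq.trans_le h.1)]; exact h.2 i hq _⟩

theorem RowAbove.set {j : ℕ} (h : RowAbove r q) (hj : j < r.length) (hy : y ≤ r[j]) :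
    RowAbove (r.set j y) q :=
  ⟨by simpa using h.1, fun i hq hr => by
    simp only [List.getElem_set]
    split_ifs with hji
    · subst hji; exact hy.trans_lt (h.2 j hq hj)
    · exact h.2 i hq _⟩

theorem RowAbove.nil (r : List ℕ) : RowAbove r [] := ⟨by simp, by simp⟩

theorem RowAbove.bumpIdx_le {j : ℕ} (h : RowAbove r q) (hj : j < r.length) :
    bumpIdx q r[j] ≤ j := by
  by_contra! hlt
  have hjq : j < q.length := hlt.trans_le bumpIdx_le_length
  exact absurd (h.2 j hjq hj) (not_lt.2 (getElem_le_of_lt_bumpIdx hlt hjq))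

theorem RowAbove.rowInsert {z : ℕ} (h : RowAbove p q) (hk : bumpIdx q z < p.length)
    (hlt : ∀ i (hi : i < p.length), i ≤ bumpIdx q z → p[i] < z) :
    RowAbove p (rowInsert q z).1 := by
  by_cases hb : bumpIdx q z < q.length
  · rw [rowInsert_of_lt hb]
    refine ⟨by simpa using h.1, fun i hq hp => ?_⟩
    simp only [List.getElem_set]
    split_ifs with hki
    · exact hlt i hp hki.ge
    · exact h.2 i (by simpa using hq) hp
  · rw [rowInsert_of_not_lt hb]
    have hkq : bumpIdx q z = q.length := le_antisymm bumpIdx_le_length (not_lt.1 hb)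
    refine ⟨by simpa [← hkq] using hk, fun i hq hp => ?_⟩
    rcases Nat.lt_or_ge i q.length with hi | hi
    · rw [List.getElem_append_left hi]; exact h.2 i hi hp
    · simp only [List.getElem_append_right hi, List.length_append, List.length_singleton] at hq ⊢
      simpa using hlt i hp (by omega)

theorem isRow_rowInsert (hr : IsRow n r) (hy : y ∈ Set.Icc 1 n) : IsRow n (rowInsert r y).1 := by
  by_cases hb : bumpIdx r y < r.length
  · rw [rowInsert_of_lt hb]
    refine ⟨?_, fun x hx => (List.mem_or_eq_of_mem_set hx).elim (hr.2 x) (· ▸ hy)⟩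
    obtain ⟨α, β, hsplit, hset, hαy⟩ := split_of_bumpIdx_lt hb
    have hyz := lt_getElem_bumpIdx hb
    have hs := hr.1
    rw [hsplit, List.pairwise_append, List.pairwise_cons] at hs
    obtain ⟨hα, ⟨hzβ, hβ⟩, hαzβ⟩ := hs
    rw [hset, List.pairwise_append, List.pairwise_cons]
    refine ⟨hα, ⟨fun b hb => hyz.le.trans (hzβ b hb), hβ⟩, fun a ha b hb => ?_⟩
    rcases List.mem_cons.1 hb with rfl | hb
    · exact hαy a ha
    · exact hαzβ a ha b (List.mem_cons_of_mem _ hb)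
  · rw [rowInsert_of_not_lt hb]
    refine ⟨List.pairwise_append.2 ⟨hr.1, by simp, fun a ha b hb' => ?_⟩, ?_⟩
    · rw [List.mem_singleton.1 hb']; exact le_of_not_bumpIdx_lt hb a ha
    · exact fun x hx => (List.mem_append.1 hx).elim (hr.2 x) fun h => List.mem_singleton.1 h ▸ hy

theorem isTableau_nil : IsTableau n [] := ⟨by simp, .nil⟩

theorem isTableau_cons {t : List (List ℕ)} :
    IsTableau n (r :: t) ↔ IsRow n r ∧ (∀ q ∈ t, RowAbove r q) ∧ IsTableau n t := by
  simp only [IsTableau, List.forall_mem_cons, List.pairwise_cons]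
  tauto

theorem tabInsert_eq_cons (t : List (List ℕ)) (z : ℕ) :
    ∃ tl, tabInsert t z = (rowInsert (t.headD []) z).1 :: tl := by
  rcases t with _ | ⟨r, t⟩
  · exact ⟨[], by simp [tabInsert, rowInsert]⟩
  · by_cases hb : bumpIdx r z < r.length
    · exact ⟨_, by rw [tabInsert_cons_of_lt hb, List.headD_cons, rowInsert_of_lt hb]⟩
    · exact ⟨_, by rw [tabInsert_cons_of_not_lt hb, List.headD_cons, rowInsert_of_not_lt hb]⟩

theorem isTableau_tabInsert : ∀ {t : List (List ℕ)} {y : ℕ}, IsTableau n t → y ∈ Set.Icc 1 n →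
    IsTableau n (tabInsert t y)
  | [], _, _, hy => isTableau_cons.2
      ⟨⟨by simp, by simpa using hy⟩, by simp, isTableau_nil⟩
  | r :: t, y, ht, hy => by
    obtain ⟨hr, hrt, ht⟩ := isTableau_cons.1 ht
    by_cases hb : bumpIdx r y < r.length
    · rw [tabInsert_cons_of_lt hb]
      have ht' := isTableau_tabInsert ht (hr.2 _ (List.getElem_mem hb))
      have hd : RowAbove r (t.headD []) := by
        cases t <;> simp_all [RowAbove.nil]
      have hhead : RowAbove (r.set (bumpIdx r y) y) (rowInsert (t.headD []) r[bumpIdx r y]).1 :=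
        (hd.set hb (lt_getElem_bumpIdx hb).le).rowInsert
          (by simpa using (hd.bumpIdx_le hb).trans_lt hb)
          fun i _ hi => (getElem_set_bumpIdx_le (hi.trans (hd.bumpIdx_le hb)) _).trans_lt
            (lt_getElem_bumpIdx hb)
      obtain ⟨tl, htl⟩ := tabInsert_eq_cons t r[bumpIdx r y]
      rw [htl] at ht' ⊢
      refine isTableau_cons.2 ⟨by simpa [rowInsert_of_lt hb] using isRow_rowInsert hr hy,
        fun q hq => ?_, ht'⟩
      rcases List.mem_cons.1 hq with rfl | hq
      · exact hhead
      · exact hhead.trans ((isTableau_cons.1 ht').2.1 q hq)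
    · rw [tabInsert_cons_of_not_lt hb]
      exact isTableau_cons.2 ⟨by simpa [rowInsert_of_not_lt hb] using isRow_rowInsert hr hy,
        fun q hq => (hrt q hq).append _, ht⟩

end Tableaux

def rowWord (t : List (List ℕ)) : List ℕ := t.reverse.flatten

section RowReading

variable {n : ℕ}

theorem rowWord_cons (r : List ℕ) (t : List (List ℕ)) : rowWord (r :: t) = rowWord t ++ r := by
  simp [rowWord]

theorem rowWord_append_singleton (t : List (List ℕ)) (q : List ℕ) :
    rowWord (t ++ [q]) = q ++ rowWord t := by
  simp [rowWord]

theorem knuthEquiv_append_of_bumpIdx_lt {r : List ℕ} {y : ℕ} (hr : IsRow n r) (hy : y ∈ Set.Icc 1 n)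
    (hb : bumpIdx r y < r.length) :
    KnuthEquiv n (r ++ [y]) (r[bumpIdx r y] :: r.set (bumpIdx r y) y) := by
  obtain ⟨α, β, hsplit, hset, hαy⟩ := split_of_bumpIdx_lt hb
  have hs := hr.1
  have hn := hr.2
  rw [hsplit, List.pairwise_append] at hs
  rw [hsplit] at hn
  rw [hset]
  conv_lhs => rw [hsplit]
  exact knuthEquiv_bump hs.1 hs.2.1
    (fun a ha => ⟨(hn a (by simp [ha])).1, hαy a ha⟩) (lt_getElem_bumpIdx hb) hy.1
    (fun b hb => (hn b (by simp [hb])).2)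

theorem knuthEquiv_rowWord_tabInsert : ∀ {t : List (List ℕ)} {y : ℕ}, (∀ r ∈ t, IsRow n r) →
    y ∈ Set.Icc 1 n → KnuthEquiv n (rowWord t ++ [y]) (rowWord (tabInsert t y))
  | [], y, _, _ => .refl [y]
  | r :: t, y, ht, hy => by
    have hr := ht r (by simp)
    by_cases hb : bumpIdx r y < r.length
    · rw [tabInsert_cons_of_lt hb, rowWord_cons, rowWord_cons]
      calc KnuthEquiv n (rowWord t ++ r ++ [y]) (rowWord t ++ r[bumpIdx r y] :: r.set _ y) := by
            simpa using (knuthEquiv_append_of_bumpIdx_lt hr hy hb).append_left (rowWord t)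
        KnuthEquiv n _ (rowWord (tabInsert t r[bumpIdx r y]) ++ r.set _ y) := by
            simpa using (knuthEquiv_rowWord_tabInsert (fun q hq => ht q (by simp [hq]))
              (hr.2 _ (List.getElem_mem hb))).append_right (r.set (bumpIdx r y) y)
    · rw [tabInsert_cons_of_not_lt hb, rowWord_cons, rowWord_cons, List.append_assoc]
      exact .refl _

theorem schensted_append_singleton (w : List ℕ) (y : ℕ) :
    Schensted (w ++ [y]) = tabInsert (Schensted w) y :=
  List.foldl_concat ..

theorem isTableau_schensted {w : List ℕ} (hw : ∀ x ∈ w, x ∈ Set.Icc 1 n) :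
    IsTableau n (Schensted w) := by
  induction w using List.reverseRecOn with
  | nil => exact isTableau_nil
  | append_singleton w y ih =>
    rw [schensted_append_singleton]
    exact isTableau_tabInsert (ih fun x hx => hw x (by simp [hx])) (hw y (by simp))

theorem knuthEquiv_rowWord_schensted {w : List ℕ} (hw : ∀ x ∈ w, x ∈ Set.Icc 1 n) :
    KnuthEquiv n w (rowWord (Schensted w)) := by
  induction w using List.reverseRecOn with
  | nil => exact .refl _
  | append_singleton w y ih =>
    have hw' : ∀ x ∈ w, x ∈ Set.Icc 1 n := fun x hx => hw x (by simp [hx])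
    rw [schensted_append_singleton]
    exact (ih hw').append_right [y] |>.trans <|
      knuthEquiv_rowWord_tabInsert (isTableau_schensted hw').1 (hw y (by simp))

end RowReading

def width (t : List (List ℕ)) : ℕ := (t.map List.length).foldr max 0

def column (t : List (List ℕ)) (j : ℕ) : List ℕ := (t.filterMap (·[j]?)).reverse

section ColumnReading

variable {n : ℕ} {t : List (List ℕ)}

theorem colReading_eq (t : List (List ℕ)) :
    colReading t = ((List.range (width t)).map (column t)).flatten := rfl

theorem width_map_tail (t : List (List ℕ)) : width (t.map List.tail) = width t - 1 := by
  induction t with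
  | nil => rfl
  | cons r t ih =>
    simp only [width, List.map_cons, List.foldr_cons, List.length_tail] at ih ⊢
    omega

theorem eq_nil_of_width_eq_zero (h : width t = 0) {r : List ℕ} (hr : r ∈ t) : r = [] := by
  induction t with
  | nil => simp at hr
  | cons r' t ih =>
    simp only [width, List.map_cons, List.foldr_cons] at h ih
    rcases List.mem_cons.1 hr with rfl | hr
    · exact List.length_eq_zero_iff.1 (by omega)
    · exact ih (by omega) hr

theorem column_map_tail (t : List (List ℕ)) (j : ℕ) :
    column (t.map List.tail) j = column t (j + 1) := by
  simp [column, List.filterMap_map, List.getElem?_tail]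

theorem column_append_singleton (t : List (List ℕ)) (q : List ℕ) (j : ℕ) :
    column (t ++ [q]) j = q[j]?.toList ++ column t j := by
  cases h : q[j]? <;> simp [column, List.filterMap_append, h]

theorem colReading_of_width_pos (h : 0 < width t) :
    colReading t = column t 0 ++ colReading (t.map List.tail) := by
  obtain ⟨L, hL⟩ := Nat.exists_eq_succ_of_ne_zero h.ne'
  rw [colReading_eq, colReading_eq, width_map_tail, hL, List.range_succ_eq_map,
    funext (column_map_tail t)]
  simp [Function.comp_def]

theorem mem_column {j b : ℕ} (hb : b ∈ column t j) : ∃ p ∈ t, p[j]? = some b :=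
  List.mem_filterMap.1 (List.mem_reverse.1 hb)

theorem pairwise_column (h : t.Pairwise RowAbove) (j : ℕ) : (column t j).Pairwise (· > ·) := by
  rw [column, List.pairwise_reverse, List.pairwise_filterMap]
  refine h.imp fun hpq b hb b' hb' => ?_
  obtain ⟨hj, rfl⟩ := List.getElem?_eq_some_iff.1 hb
  obtain ⟨hj', rfl⟩ := List.getElem?_eq_some_iff.1 hb'
  exact hpq.2 j hj' hj

theorem isTableau_append_singleton {q : List ℕ} (h : IsTableau n (t ++ [q])) :
    IsTableau n t ∧ IsRow n q ∧ ∀ p ∈ t, RowAbove p q := by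
  obtain ⟨hrows, hpw⟩ := h
  rw [List.pairwise_append] at hpw
  exact ⟨⟨fun r hr => hrows r (by simp [hr]), hpw.1⟩, hrows q (by simp),
    fun p hp => hpw.2.2 p hp q (by simp)⟩

theorem RowAbove.tail {r q : List ℕ} (h : RowAbove r q) : RowAbove r.tail q.tail :=
  ⟨by simpa using Nat.sub_le_sub_right h.1 1, fun i hq hr => by
    simp only [List.getElem_tail]
    exact h.2 (i + 1) (by simp at hq; omega) _⟩

theorem isTableau_map_tail (h : IsTableau n t) : IsTableau n (t.map List.tail) := by
  refine ⟨fun r hr => ?_, List.pairwise_map.2 (h.2.imp RowAbove.tail)⟩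
  obtain ⟨p, hp, rfl⟩ := List.mem_map.1 hr
  exact ⟨(h.1 p hp).1.sublist (List.tail_sublist p),
    fun x hx => (h.1 p hp).2 x (List.mem_of_mem_tail hx)⟩

theorem knuthEquiv_rowWord_column_zero (h : IsTableau n t) :
    KnuthEquiv n (rowWord t) (column t 0 ++ rowWord (t.map List.tail)) := by
  induction t using List.reverseRecOn with
  | nil => exact .refl []
  | append_singleton t q ih =>
    obtain ⟨ht, hq, hqt⟩ := isTableau_append_singleton h
    rcases q with _ | ⟨a, s⟩
    · simpa [rowWord_append_singleton, column_append_singleton] using ih ht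
    · have hcol : (a :: column t 0).Pairwise (· > ·) := by
        refine .cons (fun b hb => ?_) (pairwise_column ht.2 0)
        obtain ⟨p, hp, hb⟩ := mem_column hb
        obtain ⟨h0, rfl⟩ := List.getElem?_eq_some_iff.1 hb
        exact (hqt p hp).2 0 (by simp) h0
      have hcol1 : ∀ b ∈ column t 0, 1 ≤ b := by
        intro b hb
        obtain ⟨p, hp, hb⟩ := mem_column hb
        exact ((ht.1 p hp).2 b (List.mem_of_getElem? hb)).1
      have hslide : KnuthEquiv n (a :: s ++ rowWord t)
          (a :: (column t 0 ++ s) ++ rowWord (t.map List.tail)) :=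
        calc KnuthEquiv n (a :: s ++ rowWord t)
              (a :: s ++ (column t 0 ++ rowWord (t.map List.tail))) := (ih ht).append_left _
          KnuthEquiv n _ (a :: (column t 0 ++ s) ++ rowWord (t.map List.tail)) := by
              simpa using (knuthEquiv_row_append_column hq.1 hcol
                (fun b hb => (hq.2 b (by simp [hb])).2) hcol1).append_right
                (rowWord (t.map List.tail))
      simpa [rowWord_append_singleton, column_append_singleton] using hslide

theorem knuthEquiv_rowWord_colReading (ht : IsTableau n t) :
    KnuthEquiv n (rowWord t) (colReading t) := by
  induction hw : width t generalizing t with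
  | zero =>
    have hrow : rowWord t = [] := List.flatten_eq_nil_iff.2 fun r hr =>
      eq_nil_of_width_eq_zero hw (List.mem_reverse.1 hr)
    rw [hrow, colReading_eq, hw]
    exact .refl []
  | succ L ih =>
    rw [colReading_of_width_pos (by omega)]
    exact (knuthEquiv_rowWord_column_zero ht).trans
      ((ih (isTableau_map_tail ht) (by simp [width_map_tail, hw])).append_left _)

end ColumnReading

/-- In the plactic monoid `P_n`, every word is congruent to the column reading
of its Schensted tableau: `w = C(P(w))`. -/
theorem word_congruent_colReading_schensted (n : ℕ) (w : List ℕ)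
    (hw : ∀ x ∈ w, 1 ≤ x ∧ x ≤ n) :
    Relation.EqvGen (KnuthStep n) w (colReading (Schensted w)) :=
  (knuthEquiv_rowWord_schensted hw).trans (knuthEquiv_rowWord_colReading (isTableau_schensted hw))
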